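/- arXiv:2001.02466 — 3 statements merged into one kernel-verified Lean document; each statement's English description precedes it below -/
import Mathlib

section
/- Let Φ_1, Φ_2, Φ_3 be real symmetric D×D matrices (D ≥ 1) such that Φ_1 and Φ_3 are positive semi-definite and λ_min(Φ_2) > −(2√6/3)·√(λ_min(Φ_1)·λ_min(Φ_3)). Then for every real t > 0 the matrix t·Φ_1 + (t²/2)·Φ_2 + (t³/6)·Φ_3 is positive definite. -/
/-!
Write `λᵢ = λ_min(Φᵢ)` and `|x|² = ∑ xᵢ²`. The Rayleigh bound `λᵢ |x|² ≤ xᵀ Φᵢ x` reduces the claim to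
positivity of the scalar cubic `t λ₁ + t²/2 λ₂ + t³/6 λ₃` for `t > 0`. By AM-GM,
`λ₁ + t²/6 λ₃ ≥ (√6/3) t √(λ₁ λ₃)`, so the cubic is at least `t²/2 (λ₂ + (2√6/3) √(λ₁ λ₃)) > 0`.
-/

open Matrix

/-- The smallest eigenvalue of a real symmetric matrix, characterised as the
infimum of the quadratic form `vᵀ A v` over unit vectors `v`. -/
noncomputable def lambdaMin {D : ℕ} (A : Matrix (Fin D) (Fin D) ℝ) : ℝ :=
  ⨅ v : {v : Fin D → ℝ // ∑ i, (v i) ^ 2 = 1},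
    dotProduct (v : Fin D → ℝ) (A.mulVec (v : Fin D → ℝ))

section lambdaMin

variable {D : ℕ}

lemma abs_le_one_of_sum_sq_eq_one {v : Fin D → ℝ} (hv : ∑ i, v i ^ 2 = 1) (i : Fin D) :
    |v i| ≤ 1 := by
  rw [← sq_le_one_iff_abs_le_one, ← hv]
  exact Finset.single_le_sum (fun j _ => sq_nonneg (v j)) (Finset.mem_univ i)

lemma sum_sq_pos_of_ne_zero {x : Fin D → ℝ} (hx : x ≠ 0) : 0 < ∑ i, x i ^ 2 := by
  obtain ⟨i, hi⟩ := Function.ne_iff.mp hx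
  exact Finset.sum_pos' (fun j _ => sq_nonneg (x j)) ⟨i, Finset.mem_univ i, by simp_all [sq_pos_iff]⟩

lemma bddBelow_range_dotProduct_mulVec (A : Matrix (Fin D) (Fin D) ℝ) :
    BddBelow (Set.range fun v : {v : Fin D → ℝ // ∑ i, v i ^ 2 = 1} =>
      (v : Fin D → ℝ) ⬝ᵥ A *ᵥ (v : Fin D → ℝ)) := by
  refine ⟨-∑ i, ∑ j, |A i j|, ?_⟩
  rintro _ ⟨⟨v, hv⟩, rfl⟩
  have hterm (i j : Fin D) : |v i * (A i j * v j)| ≤ |A i j| := by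
    rw [abs_mul, abs_mul]
    have hi := abs_le_one_of_sum_sq_eq_one hv i
    have hj := abs_le_one_of_sum_sq_eq_one hv j
    calc |v i| * (|A i j| * |v j|) ≤ 1 * (|A i j| * 1) := by gcongr
      _ = |A i j| := by ring
  simp only [dotProduct, mulVec, Finset.mul_sum, ← Finset.sum_neg_distrib]
  gcongr with i _ j _
  linarith [neg_abs_le (v i * (A i j * v j)), hterm i j]

lemma lambdaMin_le_dotProduct_mulVec (A : Matrix (Fin D) (Fin D) ℝ) {v : Fin D → ℝ}
    (hv : ∑ i, v i ^ 2 = 1) : lambdaMin A ≤ v ⬝ᵥ A *ᵥ v :=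
  ciInf_le (bddBelow_range_dotProduct_mulVec A) ⟨v, hv⟩

lemma lambdaMin_mul_sum_sq_le (A : Matrix (Fin D) (Fin D) ℝ) (x : Fin D → ℝ) :
    lambdaMin A * ∑ i, x i ^ 2 ≤ x ⬝ᵥ A *ᵥ x := by
  rcases eq_or_ne x 0 with rfl | hx
  · simp
  set s := ∑ i, x i ^ 2
  have hs : 0 < s := sum_sq_pos_of_ne_zero hx
  have hunit : ∑ i, ((√s)⁻¹ • x) i ^ 2 = 1 := by
    simp only [Pi.smul_apply, smul_eq_mul, mul_pow, ← Finset.mul_sum, inv_pow,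
      Real.sq_sqrt hs.le]
    exact inv_mul_cancel₀ hs.ne'
  have h := lambdaMin_le_dotProduct_mulVec A hunit
  rw [mulVec_smul, smul_dotProduct, dotProduct_smul, smul_eq_mul, smul_eq_mul, ← mul_assoc,
    ← sq, inv_pow, Real.sq_sqrt hs.le, le_inv_mul_iff₀ hs] at h
  linarith

lemma lambdaMin_nonneg_of_posSemidef {A : Matrix (Fin D) (Fin D) ℝ} (hA : A.PosSemidef) :
    0 ≤ lambdaMin A :=
  Real.iInf_nonneg fun v => by simpa using hA.dotProduct_mulVec_nonneg v

end lambdaMin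

lemma sqrt_six_div_three_mul_sqrt_mul_le {a c : ℝ} (ha : 0 ≤ a) (hc : 0 ≤ c) (t : ℝ) :
    √6 / 3 * t * √(a * c) ≤ a + t ^ 2 / 6 * c := by
  have h6 : √6 ^ 2 = 6 := Real.sq_sqrt (by norm_num)
  have hsq : a + t ^ 2 / 6 * c - √6 / 3 * t * √(a * c) = (√a - t * √c * √6 / 6) ^ 2 := by
    rw [Real.sqrt_mul ha]
    linear_combination -Real.sq_sqrt ha - t ^ 2 / 36 * (√c ^ 2 * h6 + 6 * Real.sq_sqrt hc)
  linarith [sq_nonneg (√a - t * √c * √6 / 6)]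

lemma cubic_pos_of_sqrt_mul_bound {a b c t : ℝ} (ha : 0 ≤ a) (hc : 0 ≤ c) (ht : 0 < t)
    (hb : -(2 * √6 / 3) * √(a * c) < b) :
    0 < t * a + t ^ 2 / 2 * b + t ^ 3 / 6 * c := by
  have hamgm := mul_le_mul_of_nonneg_left (sqrt_six_div_three_mul_sqrt_mul_le ha hc t) ht.le
  have hpos : 0 < t ^ 2 / 2 * (b + 2 * √6 / 3 * √(a * c)) := by
    have : 0 < b + 2 * √6 / 3 * √(a * c) := by linarith
    positivity
  linarith

theorem tme3_posDef_general
    {D : ℕ}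
    (Φ₁ Φ₂ Φ₃ : Matrix (Fin D) (Fin D) ℝ)
    (h₂symm : Φ₂.IsSymm)
    (h₁ : Φ₁.PosSemidef) (h₃ : Φ₃.PosSemidef)
    (h₂ : lambdaMin Φ₂ >
      -(2 * Real.sqrt 6 / 3) * Real.sqrt (lambdaMin Φ₁ * lambdaMin Φ₃)) :
    ∀ t : ℝ, 0 < t →
      (t • Φ₁ + (t ^ 2 / 2) • Φ₂ + (t ^ 3 / 6) • Φ₃).PosDef := by
  intro t ht
  have hherm : (t • Φ₁ + (t ^ 2 / 2) • Φ₂ + (t ^ 3 / 6) • Φ₃).IsHermitian :=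
    ((h₁.isHermitian.smul (.all _)).add ((isHermitian_iff_isSymm.2 h₂symm).smul (.all _))).add
      (h₃.isHermitian.smul (.all _))
  refine posDef_iff_dotProduct_mulVec.2 ⟨hherm, fun x hx => ?_⟩
  have hcubic := cubic_pos_of_sqrt_mul_bound (lambdaMin_nonneg_of_posSemidef h₁)
    (lambdaMin_nonneg_of_posSemidef h₃) ht h₂
  have h₁x := lambdaMin_mul_sum_sq_le Φ₁ x
  have h₂x := lambdaMin_mul_sum_sq_le Φ₂ x
  have h₃x := lambdaMin_mul_sum_sq_le Φ₃ x
  calc 0 < (t * lambdaMin Φ₁ + t ^ 2 / 2 * lambdaMin Φ₂ + t ^ 3 / 6 * lambdaMin Φ₃)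
        * ∑ i, x i ^ 2 := mul_pos hcubic (sum_sq_pos_of_ne_zero hx)
    _ = t * (lambdaMin Φ₁ * ∑ i, x i ^ 2) + t ^ 2 / 2 * (lambdaMin Φ₂ * ∑ i, x i ^ 2)
        + t ^ 3 / 6 * (lambdaMin Φ₃ * ∑ i, x i ^ 2) := by ring
    _ ≤ t * (x ⬝ᵥ Φ₁ *ᵥ x) + t ^ 2 / 2 * (x ⬝ᵥ Φ₂ *ᵥ x) + t ^ 3 / 6 * (x ⬝ᵥ Φ₃ *ᵥ x) := by
        gcongr
    _ = star x ⬝ᵥ (t • Φ₁ + (t ^ 2 / 2) • Φ₂ + (t ^ 3 / 6) • Φ₃) *ᵥ x := by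
        simp only [add_mulVec, smul_mulVec, dotProduct_add, dotProduct_smul, star_trivial,
          smul_eq_mul]

/-- Part 2 of Proposition 1 of the paper: if `Φ₁, Φ₃` are positive
semi-definite and `λ_min(Φ₂) > −(2√6/3)·√(λ_min(Φ₁)·λ_min(Φ₃))`, then the
third-order TME covariance estimate `t•Φ₁ + (t²/2)•Φ₂ + (t³/6)•Φ₃` is positive
definite for every `t > 0`. -/
theorem tme3_posDef
    {D : ℕ} (hD : 1 ≤ D)
    (Φ₁ Φ₂ Φ₃ : Matrix (Fin D) (Fin D) ℝ)
    (h₂symm : Φ₂.IsSymm)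
    (h₁ : Φ₁.PosSemidef) (h₃ : Φ₃.PosSemidef)
    (h₂ : lambdaMin Φ₂ >
      -(2 * Real.sqrt 6 / 3) * Real.sqrt (lambdaMin Φ₁ * lambdaMin Φ₃)) :
    ∀ t : ℝ, 0 < t →
      (t • Φ₁ + (t ^ 2 / 2) • Φ₂ + (t ^ 3 / 6) • Φ₃).PosDef :=
  tme3_posDef_general Φ₁ Φ₂ Φ₃ h₂symm h₁ h₃ h₂
end

section
/- Let M ≥ 1 and D ≥ 1 be integers and Φ_1, …, Φ_M real symmetric D×D matrices. Then the following are equivalent: (i) for every m with 1 ≤ m ≤ M and every real t > 0, the matrix Σ_m(t) = Σ_{r=1}^m (t^r / r!) · Φ_r is positive definite; (ii) Φ_1 is positive definite and Φ_r is positive semi-definite for every r with 1 ≤ r ≤ M. -/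
/-!
Sufficiency: `Σ_m(t)` is `t Φ₁`, positive definite, plus nonnegative multiples of positive
semidefinite matrices. Necessity: for fixed `x`, `t ↦ xᵀ Σ_r(t) x` is a polynomial in `t` that is
positive for `t > 0`, so its top coefficient `xᵀ Φ_r x / r!` is nonnegative, since a polynomial
with negative leading coefficient tends to `-∞`.
-/

open Matrix Finset Filter Polynomial

theorem Polynomial.leadingCoeff_nonneg_of_eventually_nonneg {𝕜 : Type*} [NormedField 𝕜]
    [LinearOrder 𝕜] [IsStrictOrderedRing 𝕜] [OrderTopology 𝕜] {P : 𝕜[X]}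
    (h : ∀ᶠ x in atTop, 0 ≤ P.eval x) : 0 ≤ P.leadingCoeff := by
  by_contra! hneg
  rcases le_or_gt P.degree 0 with hdeg | hdeg
  · obtain ⟨x, hx⟩ := h.exists
    rw [eq_C_of_degree_le_zero hdeg, eval_C] at hx
    rw [leadingCoeff, natDegree_eq_zero_iff_degree_le_zero.mpr hdeg] at hneg
    exact hneg.not_ge hx
  · have hbot := (P.tendsto_atBot_of_leadingCoeff_nonpos hdeg hneg.le).eventually_lt_atBot 0
    obtain ⟨x, hx, hx'⟩ := (h.and hbot).exists
    exact hx'.not_ge hx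

theorem nonneg_of_eventually_nonneg_sum_mul_pow {𝕜 : Type*} [NormedField 𝕜]
    [LinearOrder 𝕜] [IsStrictOrderedRing 𝕜] [OrderTopology 𝕜] {s : Finset ℕ} {a : ℕ → 𝕜}
    {n : ℕ} (hn : n ∈ s) (hs : ∀ k ∈ s, k ≤ n)
    (h : ∀ᶠ x in atTop, 0 ≤ ∑ k ∈ s, a k * x ^ k) : 0 ≤ a n := by
  set P : 𝕜[X] := ∑ k ∈ s, C (a k) * X ^ k
  have hcoeff : P.coeff n = a n := by simp [P, hn]
  have hdeg : P.natDegree ≤ n :=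
    natDegree_sum_le_of_forall_le s _ fun k hk => (natDegree_C_mul_X_pow_le _ _).trans (hs k hk)
  have heval : ∀ x, P.eval x = ∑ k ∈ s, a k * x ^ k := by
    simp [P, eval_finsetSum]
  rcases hdeg.eq_or_lt with hdeg | hdeg
  · rw [← hcoeff, ← hdeg, coeff_natDegree]
    exact leadingCoeff_nonneg_of_eventually_nonneg (by simpa only [heval] using h)
  · rw [← hcoeff, coeff_eq_zero_of_natDegree_lt hdeg]

theorem Matrix.posSemidef_of_eventually_posSemidef_sum_pow_smul {n : Type*} [Fintype n]
    {s : Finset ℕ}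
    {B : ℕ → Matrix n n ℝ} {r : ℕ} (hr : r ∈ s) (hs : ∀ k ∈ s, k ≤ r) (hB : (B r).IsHermitian)
    (h : ∀ᶠ t : ℝ in atTop, (∑ k ∈ s, t ^ k • B k).PosSemidef) : (B r).PosSemidef := by
  refine posSemidef_iff_dotProduct_mulVec.mpr ⟨hB, fun x => ?_⟩
  refine nonneg_of_eventually_nonneg_sum_mul_pow (a := fun k => star x ⬝ᵥ B k *ᵥ x) hr hs
    (h.mono fun t ht => ?_)
  simpa [sum_mulVec, dotProduct_sum, smul_mulVec, dotProduct_smul, mul_comm]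
    using ht.dotProduct_mulVec_nonneg x

theorem Matrix.posDef_sum_of_posDef_of_posSemidef {n R ι : Type*} [Ring R] [PartialOrder R]
    [StarRing R] [AddLeftMono R] {s : Finset ι}
    {A : ι → Matrix n n R} {i : ι} (hi : i ∈ s) (hAi : (A i).PosDef)
    (hA : ∀ j ∈ s, (A j).PosSemidef) : (∑ j ∈ s, A j).PosDef := by
  classical
  rw [← add_sum_erase s A hi]
  exact hAi.add_posSemidef (posSemidef_sum _ fun j hj => hA j (mem_of_mem_erase hj))

theorem tme_all_orders_posDef_iff_general
    {D M : ℕ} (hM : 1 ≤ M)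
    (Φ : ℕ → Matrix (Fin D) (Fin D) ℝ)
    (hΦ : ∀ r ∈ Finset.Icc 1 M, (Φ r).IsSymm) :
    (∀ m, 1 ≤ m → m ≤ M → ∀ t : ℝ, 0 < t →
        (∑ r ∈ Finset.Icc 1 m, (t ^ r / (r.factorial : ℝ)) • Φ r).PosDef) ↔
      ((Φ 1).PosDef ∧ ∀ r ∈ Finset.Icc 1 M, (Φ r).PosSemidef) := by
  constructor
  · intro h
    refine ⟨by simpa using h 1 le_rfl hM 1 one_pos, fun r hr => ?_⟩
    obtain ⟨hr1, hrM⟩ := mem_Icc.mp hr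
    have hfact : (0 : ℝ) < r.factorial := by positivity
    have hB : ((r.factorial : ℝ)⁻¹ • Φ r).PosSemidef := by
      refine posSemidef_of_eventually_posSemidef_sum_pow_smul (s := Icc 1 r)
        (B := fun k => (k.factorial : ℝ)⁻¹ • Φ k)
        (mem_Icc.mpr ⟨hr1, le_rfl⟩) (fun k hk => (mem_Icc.mp hk).2)
        ((isHermitian_iff_isSymm.mpr (hΦ r hr) :).smul (.all _)) ?_
      filter_upwards [eventually_gt_atTop 0] with t ht
      simpa only [smul_smul, div_eq_mul_inv] using (h r hr1 hrM t ht).posSemidef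
    simpa [smul_smul, hfact.ne'] using hB.smul hfact.le
  · rintro ⟨hΦ1, hΦpsd⟩ m hm1 hmM t ht
    refine posDef_sum_of_posDef_of_posSemidef (mem_Icc.mpr ⟨le_rfl, hm1⟩)
      (hΦ1.smul (by positivity)) fun r hr => (hΦpsd r ?_).smul (by positivity)
    exact mem_Icc.mpr ⟨(mem_Icc.mp hr).1, (mem_Icc.mp hr).2.trans hmM⟩

/-- Precise form of the paper's remark after Theorem 1: the TME covariance
estimates `Σ_m(t) = Σ_{r=1}^m (t^r/r!) Φ_r` of every order `m = 1, …, M` are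
positive definite for all `t > 0` if and only if `Φ₁` is positive definite and
every `Φ_r`, `1 ≤ r ≤ M`, is positive semi-definite. -/
theorem tme_all_orders_posDef_iff
    {D M : ℕ} (hM : 1 ≤ M) (hD : 1 ≤ D)
    (Φ : ℕ → Matrix (Fin D) (Fin D) ℝ)
    (hΦ : ∀ r ∈ Finset.Icc 1 M, (Φ r).IsSymm) :
    (∀ m, 1 ≤ m → m ≤ M → ∀ t : ℝ, 0 < t →
        (∑ r ∈ Finset.Icc 1 m, (t ^ r / (r.factorial : ℝ)) • Φ r).PosDef) ↔
      ((Φ 1).PosDef ∧ ∀ r ∈ Finset.Icc 1 M, (Φ r).PosSemidef) :=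
  tme_all_orders_posDef_iff_general hM Φ hΦ
end

section
/- Let f: ℝ → ℝ be four times continuously differentiable and Γ ∈ ℝ a constant. Define the generator A acting on twice differentiable g: ℝ → ℝ by (A g)(x) = f(x)·g'(x) + (Γ/2)·g''(x), and write A^r for its r-fold iteration. Then for every x ∈ ℝ: A³(y ↦ y²)(x) − 2x·A³(y ↦ y)(x) − 6·A(y ↦ y)(x)·A²(y ↦ y)(x) = 2·(2·f'(x)² + 2·f(x)·f''(x) + f'''(x)·Γ)·Γ. -/
/-!
The generator obeys the product rule `A(gh) = g·Ah + h·Ag + Γ g'h'`, so `A(x·g) = x·Ag + f·g + Γ g'`.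
Expanding `A³(x·x)` with it, the terms `2x·A³x` and `6·Ax·A²x` cancel and
`Φ_{x,3} = 2Γ((Af)' + f'² + A(f'))`; finally `(Af)' = f'² + A(f')`.
-/

/-- The infinitesimal generator of the scalar SDE `dx = f(x) dt + L dW` with
`Γ = L²Q`: `(A g)(x) = f(x) g'(x) + (Γ/2) g''(x)`. -/
noncomputable def gen1 (f : ℝ → ℝ) (Γ : ℝ) (g : ℝ → ℝ) : ℝ → ℝ :=
  fun x => f x * deriv g x + (Γ / 2) * deriv (deriv g) x

section Generator

variable {f g h : ℝ → ℝ} {Γ : ℝ}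

theorem ContDiff.gen1 {n : ℕ} (hf : ContDiff ℝ n f) (hg : ContDiff ℝ (n + 2) g) :
    ContDiff ℝ n (gen1 f Γ g) := by
  have hg' : ContDiff ℝ (n + 1 + 1 : ℕ) g := by exact_mod_cast hg
  exact (hf.mul (hg'.of_le (by norm_cast; omega) |>.iterate_deriv' n 1)).add
    (contDiff_const.mul (hg'.iterate_deriv' n 2))

theorem gen1_id : gen1 f Γ (fun y => y) = f := by
  funext x
  simp [gen1, deriv_id'']

theorem gen1_const (c : ℝ) : gen1 f Γ (fun _ => c) = 0 := by
  funext x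
  simp [gen1]

theorem gen1_const_smul (c : ℝ) (g : ℝ → ℝ) : gen1 f Γ (c • g) = c • gen1 f Γ g := by
  have hd : deriv (c • g) = c • deriv g := funext fun _ => deriv_const_smul_field c g
  funext x
  simp only [gen1, hd, deriv_const_smul_field, Pi.smul_apply, smul_eq_mul]
  ring

theorem gen1_add (hg : ContDiff ℝ 2 g) (hh : ContDiff ℝ 2 h) :
    gen1 f Γ (g + h) = gen1 f Γ g + gen1 f Γ h := by
  have hd : deriv (g + h) = deriv g + deriv h :=
    funext fun x => deriv_add (hg.differentiable two_ne_zero x) (hh.differentiable two_ne_zero x)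
  have hdd : deriv (deriv g + deriv h) = deriv (deriv g) + deriv (deriv h) :=
    funext fun x => deriv_add ((ContDiff.deriv' (n := 1) hg).differentiable one_ne_zero x)
      ((ContDiff.deriv' (n := 1) hh).differentiable one_ne_zero x)
  funext x
  simp only [gen1, hd, hdd, Pi.add_apply]
  ring

theorem gen1_mul (hg : ContDiff ℝ 2 g) (hh : ContDiff ℝ 2 h) :
    gen1 f Γ (g * h) = g * gen1 f Γ h + h * gen1 f Γ g + Γ • (deriv g * deriv h) := by
  have hg₀ := hg.differentiable two_ne_zero
  have hh₀ := hh.differentiable two_ne_zero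
  have hg₁ := (ContDiff.deriv' (n := 1) hg).differentiable one_ne_zero
  have hh₁ := (ContDiff.deriv' (n := 1) hh).differentiable one_ne_zero
  have hd : deriv (g * h) = deriv g * h + g * deriv h :=
    funext fun x => deriv_mul (hg₀ x) (hh₀ x)
  funext x
  have hdd := ((hg₁ x).hasDerivAt.mul (hh₀ x).hasDerivAt).add
    ((hg₀ x).hasDerivAt.mul (hh₁ x).hasDerivAt)
  simp only [gen1, hd, hdd.deriv, Pi.add_apply, Pi.mul_apply, Pi.smul_apply, smul_eq_mul]
  ring

theorem gen1_id_mul (hg : ContDiff ℝ 2 g) :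
    gen1 f Γ ((fun y => y) * g) = (fun y => y) * gen1 f Γ g + g * f + Γ • deriv g := by
  rw [gen1_mul (by fun_prop) hg, gen1_id, deriv_id'', show (fun _ : ℝ => (1 : ℝ)) = 1 from rfl,
    one_mul]

theorem deriv_gen1 (hf : Differentiable ℝ f) (hg : ContDiff ℝ 3 g) :
    deriv (gen1 f Γ g) = deriv f * deriv g + gen1 f Γ (deriv g) := by
  have hg₁ := ContDiff.deriv' (n := 2) hg
  have hg₂ := (ContDiff.deriv' (n := 1) hg₁).differentiable one_ne_zero
  funext x
  have hd : HasDerivAt (gen1 f Γ g) _ x :=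
    ((hf x).hasDerivAt.mul ((hg₁.differentiable two_ne_zero) x).hasDerivAt).add
      ((hg₂ x).hasDerivAt.const_mul (Γ / 2))
  simp only [hd.deriv, gen1, Pi.add_apply, Pi.mul_apply]
  ring

end Generator

/-- Example 2 of the paper, third-order coefficient: for four times
continuously differentiable `f`,
`Φ_{x,3} = A³(x²) − 2x·A³(x) − 6·A(x)·A²(x) = 2(2 f'(x)² + 2 f(x) f''(x) + f'''(x) Γ) Γ`. -/
theorem tme_phi_three (f : ℝ → ℝ) (hf : ContDiff ℝ 4 f) (Γ : ℝ) :
    ∀ x : ℝ,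
      gen1 f Γ (gen1 f Γ (gen1 f Γ (fun y => y ^ 2))) x
        - 2 * x * gen1 f Γ (gen1 f Γ (gen1 f Γ (fun y => y))) x
        - 6 * gen1 f Γ (fun y => y) x * gen1 f Γ (gen1 f Γ (fun y => y)) x
      = 2 * (2 * (deriv f x) ^ 2 + 2 * f x * deriv (deriv f) x
          + deriv (deriv (deriv f)) x * Γ) * Γ := by
  have hf₂ : ContDiff ℝ 2 f := hf.of_le (by norm_num)
  have hf₃ : ContDiff ℝ 3 f := hf.of_le (by norm_num)
  have hf'₂ : ContDiff ℝ 2 (deriv f) := ContDiff.deriv' (n := 2) hf₃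
  have hAf : ContDiff ℝ 2 (gen1 f Γ f) := hf₂.gen1 (by norm_num [hf])
  have hA₁ : gen1 f Γ (fun y => y ^ 2) = (2 : ℝ) • ((fun y => y) * f) + fun _ => Γ := by
    rw [show (fun y : ℝ => y ^ 2) = (fun y => y) * (fun y => y) from funext fun y => sq y,
      gen1_id_mul (by fun_prop), gen1_id, deriv_id'']
    funext y
    simp only [Pi.add_apply, Pi.mul_apply, Pi.smul_apply, smul_eq_mul]
    ring
  have hA₂ : gen1 f Γ (gen1 f Γ (fun y => y ^ 2))
      = (2 : ℝ) • ((fun y => y) * gen1 f Γ f + f * f + Γ • deriv f) := by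
    rw [hA₁, gen1_add ?_ contDiff_const, gen1_const, add_zero, gen1_const_smul, gen1_id_mul hf₂]
    exact (contDiff_id.mul hf₂).const_smul (2 : ℝ)
  have hA₃ : gen1 f Γ (gen1 f Γ (gen1 f Γ (fun y => y ^ 2)))
      = (2 : ℝ) • ((fun y => y) * gen1 f Γ (gen1 f Γ f) + gen1 f Γ f * f
        + Γ • deriv (gen1 f Γ f) + gen1 f Γ (f * f) + Γ • gen1 f Γ (deriv f)) := by
    have hxAf : ContDiff ℝ 2 ((fun y => y) * gen1 f Γ f) := contDiff_id.mul hAf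
    have hff : ContDiff ℝ 2 (f * f) := hf₂.mul hf₂
    rw [hA₂, gen1_const_smul, gen1_add ?_ ?_, gen1_add hxAf hff,
      gen1_id_mul hAf, gen1_const_smul]
    · exact hxAf.add hff
    · exact hf'₂.const_smul Γ
  intro x
  rw [hA₃, gen1_id, gen1_mul hf₂ hf₂, deriv_gen1 (hf.differentiable (by norm_num)) hf₃]
  simp only [gen1, Pi.add_apply, Pi.mul_apply, Pi.smul_apply, smul_eq_mul]
  ring
end
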